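/- Fix a bounded random variable X on a nonatomic probability space, w ∈ ℝ, weights λ_i > 0 for i = 2,…,n, and let U be uniformly distributed on (0,1) with w − X = F_{w−X}⁻¹(U) a.s. Then a tuple (f₂*,…,fₙ*) of quantile functions with Σ_{i=2}^n f_i* = F_{w−X}⁻¹ maximizes ∫₀¹ Σ_{i=2}^n λ_i u_i(f_i(t)) dt over all tuples (f₂,…,fₙ) of quantile functions with Σ_{i=2}^n f_i = F_{w−X}⁻¹ if and only if (f₂*(U),…,fₙ*(U)) maximizes Σ_{i=2}^n λ_i E_P[u_i(X_i)] over all comonotonic vectors (X₂,…,Xₙ) of bounded random variables with Σ_{i=2}^n X_i = w − X a.s. -/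

import Mathlib

open MeasureTheory Set

noncomputable section

variable {Ω : Type*} [MeasurableSpace Ω]

/-- The cumulative distribution function `F_X(x) = P(X ≤ x)` of a random variable. -/
def cdfR (P : Measure Ω) (X : Ω → ℝ) (x : ℝ) : ℝ := (P {ω | X ω ≤ x}).toReal

/-- The left-continuous quantile function `F_X⁻¹(t) = inf {x | F_X(x) ≥ t}`. -/
def quantR (P : Measure Ω) (X : Ω → ℝ) (t : ℝ) : ℝ := sInf {x : ℝ | t ≤ cdfR P X x}

/-- A bounded (measurable) random variable. -/
def IsBddRV (X : Ω → ℝ) : Prop := Measurable X ∧ ∃ C : ℝ, ∀ ω, |X ω| ≤ C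

/-- Comonotonicity of two random variables. -/
def ComonRV (Y Z : Ω → ℝ) : Prop := ∀ ω ω' : Ω, 0 ≤ (Y ω - Y ω') * (Z ω - Z ω')

/-- `U` is uniformly distributed on `(0,1)` under `P`. -/
def UnifOn01 (P : Measure Ω) (U : Ω → ℝ) : Prop :=
  Measurable U ∧ ∀ t ∈ Icc (0:ℝ) 1, cdfR P U t = t

/-- A nonatomic measure. -/
def NonatomicM (P : Measure Ω) : Prop :=
  ∀ s : Set Ω, MeasurableSet s → P s ≠ 0 →
    ∃ t : Set Ω, MeasurableSet t ∧ t ⊆ s ∧ 0 < P t ∧ P t < P s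

/-- Expected utility. -/
def EUf (P : Measure Ω) (u : ℝ → ℝ) (X : Ω → ℝ) : ℝ := ∫ ω, u (X ω) ∂P

/-- The conjugate `T̃(t) = 1 - T(1-t)` of a probability weighting function. -/
def conjW (T : ℝ → ℝ) : ℝ → ℝ := fun t => 1 - T (1 - t)

/-- Rank-dependent utility `∫₀¹ u(F_X⁻¹(t)) Tc′(t) dt`, where `Tc` is the conjugate
probability weighting function. -/
def RDUf (P : Measure Ω) (u : ℝ → ℝ) (Tc : ℝ → ℝ) (X : Ω → ℝ) : ℝ :=
  ∫ t in Ioo (0:ℝ) 1, u (quantR P X t) * deriv Tc t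

/-- A probability weighting function: maps `[0,1]` to `[0,1]`, twice differentiable,
strictly increasing, `T(0) = 0`, `T(1) = 1`. -/
def IsPWF (T : ℝ → ℝ) : Prop :=
  (∀ t ∈ Icc (0:ℝ) 1, T t ∈ Icc (0:ℝ) 1) ∧ StrictMonoOn T (Icc (0:ℝ) 1) ∧
    (∀ t ∈ Icc (0:ℝ) 1, DifferentiableAt ℝ T t) ∧
    (∀ t ∈ Icc (0:ℝ) 1, DifferentiableAt ℝ (deriv T) t) ∧ T 0 = 0 ∧ T 1 = 1

/-- A utility function: twice differentiable, strictly concave, strictly increasing. -/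
def IsUtility (u : ℝ → ℝ) : Prop :=
  (∀ x, DifferentiableAt ℝ u x) ∧ (∀ x, DifferentiableAt ℝ (deriv u) x) ∧
    StrictConcaveOn ℝ univ u ∧ StrictMono u

/-- `d` is the convex envelope of `g` on `[0,1]`: the greatest convex function
below `g` on `[0,1]`. -/
def IsConvexEnvelope (g d : ℝ → ℝ) : Prop :=
  ConvexOn ℝ (Icc (0:ℝ) 1) d ∧ (∀ t ∈ Icc (0:ℝ) 1, d t ≤ g t) ∧
    ∀ h : ℝ → ℝ, ConvexOn ℝ (Icc (0:ℝ) 1) h → (∀ t ∈ Icc (0:ℝ) 1, h t ≤ g t) →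
      ∀ t ∈ Icc (0:ℝ) 1, h t ≤ d t

/-- Feasible allocations: bounded random variables summing a.s. to the constant `w`. -/
def AllocC (P : Measure Ω) {m : ℕ} (w : ℝ) (X : Fin m → Ω → ℝ) : Prop :=
  (∀ i, IsBddRV (X i)) ∧ ∀ᵐ ω ∂P, (∑ i, X i ω) = w

/-- A quantile function: a nondecreasing left-continuous function on `(0,1)`. -/
def IsQuantFun (f : ℝ → ℝ) : Prop :=
  MonotoneOn f (Ioo (0:ℝ) 1) ∧ ∀ t ∈ Ioo (0:ℝ) 1, ContinuousWithinAt f (Iic t) t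

/-- `I_i := (u_i′)⁻¹`, the inverse marginal utility. -/
def invMarg (u : ℝ → ℝ) : ℝ → ℝ := Function.invFun (deriv u)

end

/-!
The quantile map and its inverse translate one problem into the other without changing the
objective. A tuple `f` of quantile functions summing to `F_{w−X}⁻¹` yields the comonotone vector
`f(U)`, whose expected utilities are the integrals `∫₀¹ u_i(f_i)` because `U` is uniform. A
comonotone vector summing to `w − X` yields the tuple of its marginal quantile functions: they sum
to `F_{w−X}⁻¹` because quantiles are additive along comonotone vectors (the sublevel sets
`{X_i ≤ b_i}` form a chain), and `E u(X_i) = ∫₀¹ u(F_{X_i}⁻¹)` by the quantile transform.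
-/

open MeasureTheory ProbabilityTheory Set Filter Topology

section Quantile

variable {Ω : Type*} [MeasurableSpace Ω] {P : Measure Ω} [IsProbabilityMeasure P] {Y : Ω → ℝ}

lemma cdfR_eq_cdf_map (hY : AEMeasurable Y P) : cdfR P Y = cdf (P.map Y) := by
  have := Measure.isProbabilityMeasure_map (μ := P) hY
  ext x
  rw [cdf_eq_real, measureReal_def, Measure.map_apply_of_aemeasurable hY measurableSet_Iic]
  rfl

lemma sInf_le_iff_le_cdf (μ : Measure ℝ) [IsProbabilityMeasure μ] {t c : ℝ} (ht : t ∈ Ioo 0 1) :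
    sInf {x | t ≤ cdf μ x} ≤ c ↔ t ≤ cdf μ c := by
  set S := {x | t ≤ cdf μ x}
  obtain ⟨x₀, hx₀⟩ :=
    ((tendsto_cdf_atBot (μ := μ)).eventually (gt_mem_nhds ht.1)).exists_forall_of_atBot
  have hbdd : BddBelow S := ⟨x₀, fun x hx => not_lt.1 fun hlt => (hx₀ x hlt.le).not_ge hx⟩
  obtain ⟨x₁, hx₁⟩ := ((tendsto_cdf_atTop (μ := μ)).eventually (lt_mem_nhds ht.2)).exists
  refine ⟨fun h => ?_, fun h => csInf_le hbdd h⟩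
  have hmem : t ≤ cdf μ (sInf S) := by
    refine ge_of_tendsto (((cdf μ).right_continuous _).mono Ioi_subset_Ici_self) ?_
    filter_upwards [self_mem_nhdsWithin] with y hy
    obtain ⟨s, hs, hsy⟩ := exists_lt_of_csInf_lt ⟨x₁, hx₁.le⟩ hy
    exact hs.trans (monotone_cdf μ hsy.le)
  exact hmem.trans (monotone_cdf μ h)

lemma cdfR_mono (hY : AEMeasurable Y P) : Monotone (cdfR P Y) :=
  cdfR_eq_cdf_map hY ▸ monotone_cdf _

lemma cdfR_le_one (hY : AEMeasurable Y P) (x : ℝ) : cdfR P Y x ≤ 1 := by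
  have := Measure.isProbabilityMeasure_map (μ := P) hY
  exact cdfR_eq_cdf_map hY ▸ cdf_le_one _ x

lemma quantR_le_iff (hY : AEMeasurable Y P) {t c : ℝ} (ht : t ∈ Ioo 0 1) :
    quantR P Y t ≤ c ↔ t ≤ cdfR P Y c := by
  have := Measure.isProbabilityMeasure_map (μ := P) hY
  rw [quantR, cdfR_eq_cdf_map hY]
  exact sInf_le_iff_le_cdf _ ht

lemma cdfR_lt_of_lt_quantR (hY : AEMeasurable Y P) {t c : ℝ} (ht : t ∈ Ioo 0 1)
    (hc : c < quantR P Y t) : cdfR P Y c < t :=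
  not_le.1 fun h => hc.not_ge ((quantR_le_iff hY ht).2 h)

lemma le_cdfR_quantR (hY : AEMeasurable Y P) {t : ℝ} (ht : t ∈ Ioo 0 1) :
    t ≤ cdfR P Y (quantR P Y t) :=
  (quantR_le_iff hY ht).1 le_rfl

lemma monotoneOn_quantR (hY : AEMeasurable Y P) : MonotoneOn (quantR P Y) (Ioo 0 1) :=
  fun _ hs _ ht hst => (quantR_le_iff hY hs).2 (hst.trans (le_cdfR_quantR hY ht))

lemma isQuantFun_quantR (hY : AEMeasurable Y P) : IsQuantFun (quantR P Y) := by
  refine ⟨monotoneOn_quantR hY, fun t ht => Metric.continuousWithinAt_iff.2 fun ε hε => ?_⟩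
  have hcdf := cdfR_lt_of_lt_quantR hY ht (sub_lt_self (quantR P Y t) hε)
  -- on `(s, t]` we are above `F (q t - ε)`, hence `q > q t - ε` there
  set s := max (cdfR P Y (quantR P Y t - ε)) (t / 2)
  have hst : s < t := max_lt hcdf (by linarith [ht.1])
  have hs0 : 0 < s := (half_pos ht.1).trans_le (le_max_right _ _)
  refine ⟨t - s, sub_pos.2 hst, fun r (hr : r ≤ t) hdist => ?_⟩
  have hsr : s < r := by linarith [(abs_lt.1 (Real.dist_eq r t ▸ hdist)).1]
  have hr01 : r ∈ Ioo 0 1 := ⟨hs0.trans hsr, hr.trans_lt ht.2⟩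
  have hlow : quantR P Y t - ε < quantR P Y r := not_le.1 fun h =>
    (((quantR_le_iff hY hr01).1 h).trans_lt' (lt_of_le_of_lt (le_max_left _ _) hsr)).false
  have hup : quantR P Y r ≤ quantR P Y t := monotoneOn_quantR hY hr01 ht hr
  rw [Real.dist_eq, abs_lt]
  constructor <;> linarith

lemma abs_quantR_le {C : ℝ} (hY : AEMeasurable Y P) (hC : ∀ ω, |Y ω| ≤ C) {t : ℝ}
    (ht : t ∈ Ioo 0 1) : |quantR P Y t| ≤ C := by
  have hcdf : ∀ c, C ≤ c → cdfR P Y c = 1 := fun c hc => by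
    have : {ω | Y ω ≤ c} = univ := eq_univ_of_forall fun ω => ((abs_le.1 (hC ω)).2).trans hc
    simp [cdfR, this]
  refine abs_le.2 ⟨le_of_forall_lt fun c hc => not_le.1 fun h => ?_,
    (quantR_le_iff hY ht).2 (hcdf C le_rfl ▸ ht.2.le)⟩
  have : {ω | Y ω ≤ c} = ∅ := eq_empty_of_forall_notMem fun ω (hω : Y ω ≤ c) =>
    hc.not_ge (hω.trans' (neg_le_of_abs_le (hC ω)))
  have h0 := (quantR_le_iff hY ht).1 h
  simp only [cdfR, this, measure_empty, ENNReal.toReal_zero] at h0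
  exact h0.not_gt ht.1

omit [IsProbabilityMeasure P] in
lemma quantR_congr {Z : Ω → ℝ} (h : Y =ᵐ[P] Z) : quantR P Y = quantR P Z := by
  have : cdfR P Y = cdfR P Z := funext fun x => by
    refine congrArg ENNReal.toReal (measure_congr ?_)
    filter_upwards [h] with ω hω
    change (Y ω ≤ x) = (Z ω ≤ x)
    rw [hω]
  funext t
  rw [quantR, quantR, this]

lemma map_quantR (hY : AEMeasurable Y P) :
    (volume.restrict (Ioo (0:ℝ) 1)).map (quantR P Y) = P.map Y := by
  have hq : AEMeasurable (quantR P Y) (volume.restrict (Ioo (0:ℝ) 1)) :=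
    aemeasurable_restrict_of_monotoneOn measurableSet_Ioo (monotoneOn_quantR hY)
  have := Measure.isProbabilityMeasure_map (μ := P) hY
  have : IsFiniteMeasure (volume.restrict (Ioo (0:ℝ) 1)) :=
    isFiniteMeasure_restrict.2 measure_Ioo_lt_top.ne
  refine Measure.ext_of_Iic _ _ fun c => ?_
  rw [Measure.map_apply_of_aemeasurable hq measurableSet_Iic,
    Measure.restrict_apply' measurableSet_Ioo,
    Measure.map_apply_of_aemeasurable hY measurableSet_Iic]
  have hset : quantR P Y ⁻¹' Iic c ∩ Ioo 0 1 = Ioc 0 (cdfR P Y c) \ {1} := by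
    ext t
    simp only [mem_inter_iff, mem_preimage, mem_Iic, mem_Ioo, Set.mem_sdiff, mem_Ioc,
      mem_singleton_iff]
    constructor
    · rintro ⟨h, ht⟩
      exact ⟨⟨ht.1, (quantR_le_iff hY ht).1 h⟩, ht.2.ne⟩
    · rintro ⟨⟨h0, h⟩, h1⟩
      have ht : t ∈ Ioo 0 1 := ⟨h0, lt_of_le_of_ne (h.trans (cdfR_le_one hY c)) h1⟩
      exact ⟨(quantR_le_iff hY ht).2 h, ht⟩
  rw [hset, measure_sdiff_null (measure_singleton 1), Real.volume_Ioc, sub_zero, cdfR,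
    ENNReal.ofReal_toReal (measure_ne_top _ _)]
  rfl

lemma integral_comp_eq_setIntegral_quantR (hY : AEMeasurable Y P) {u : ℝ → ℝ}
    (hu : Measurable u) : ∫ ω, u (Y ω) ∂P = ∫ t in Ioo 0 1, u (quantR P Y t) := by
  rw [← integral_map hY hu.aestronglyMeasurable, ← map_quantR hY,
    integral_map (aemeasurable_restrict_of_monotoneOn measurableSet_Ioo (monotoneOn_quantR hY))
      hu.aestronglyMeasurable]

end Quantile

section Uniform

variable {Ω : Type*} [MeasurableSpace Ω] {P : Measure Ω} [IsProbabilityMeasure P] {U : Ω → ℝ}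

lemma quantR_eq_self_of_unifOn01 (hU : UnifOn01 P U) {t : ℝ} (ht : t ∈ Ioo 0 1) :
    quantR P U t = t := by
  have hU' : AEMeasurable U P := hU.1.aemeasurable
  refine le_antisymm ((quantR_le_iff hU' ht).2 (hU.2 t ⟨ht.1.le, ht.2.le⟩).ge)
    (le_of_forall_lt fun c hc => not_le.1 fun h => ?_)
  have hc' : max c 0 ∈ Icc (0:ℝ) 1 :=
    ⟨le_max_right _ _, max_le (hc.le.trans ht.2.le) zero_le_one⟩
  have := ((quantR_le_iff hU' ht).1 h).trans (cdfR_mono hU' (le_max_left c 0))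
  rw [hU.2 _ hc'] at this
  exact this.not_gt (max_lt hc ht.1)

lemma map_unifOn01 (hU : UnifOn01 P U) : P.map U = volume.restrict (Ioo 0 1) := by
  rw [← map_quantR hU.1.aemeasurable, Measure.map_congr (g := id), Measure.map_id]
  exact (ae_restrict_mem measurableSet_Ioo).mono fun t ht => quantR_eq_self_of_unifOn01 hU ht

lemma ae_mem_Ioo_of_unifOn01 (hU : UnifOn01 P U) : ∀ᵐ ω ∂P, U ω ∈ Ioo 0 1 :=
  ae_of_ae_map hU.1.aemeasurable (map_unifOn01 hU ▸ ae_restrict_mem measurableSet_Ioo)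

lemma integral_comp_unifOn01 (hU : UnifOn01 P U) {h : ℝ → ℝ}
    (hh : AEStronglyMeasurable h (volume.restrict (Ioo 0 1))) :
    ∫ ω, h (U ω) ∂P = ∫ t in Ioo 0 1, h t := by
  rw [← map_unifOn01 hU] at hh ⊢
  exact (integral_map hU.1.aemeasurable hh).symm

end Uniform

section Comonotone

variable {Ω : Type*} [MeasurableSpace Ω] {P : Measure Ω} [IsProbabilityMeasure P]

omit [MeasurableSpace Ω] in
lemma ComonRV.sublevel_subset_or {Y Z : Ω → ℝ} (h : ComonRV Y Z) (a b : ℝ) :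
    {ω | Y ω ≤ a} ⊆ {ω | Z ω ≤ b} ∨ {ω | Z ω ≤ b} ⊆ {ω | Y ω ≤ a} := by
  by_contra! hcon
  obtain ⟨ω, hYω, hZω⟩ := not_subset.1 hcon.1
  obtain ⟨ω', hZω', hYω'⟩ := not_subset.1 hcon.2
  simp only [mem_ofPred_eq, not_le] at hYω hZω hYω' hZω'
  nlinarith [h ω ω']

lemma cdfR_le_cdfR_of_subset {Y Z : Ω → ℝ} {a b : ℝ} (h : {ω | Y ω ≤ a} ⊆ {ω | Z ω ≤ b}) :
    cdfR P Y a ≤ cdfR P Z b :=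
  ENNReal.toReal_mono (measure_ne_top _ _) (measure_mono h)

variable {ι : Type*} [Fintype ι] [Nonempty ι] {Xv : ι → Ω → ℝ}

lemma quantR_sum_le (hcom : ∀ i j, ComonRV (Xv i) (Xv j)) (hX : ∀ i, AEMeasurable (Xv i) P)
    {t : ℝ} (ht : t ∈ Ioo 0 1) :
    quantR P (fun ω => ∑ i, Xv i ω) t ≤ ∑ i, quantR P (Xv i) t := by
  set q := fun i => quantR P (Xv i) t
  have hdir : Directed (· ⊇ ·) fun i => {ω | Xv i ω ≤ q i} := fun i j =>
    (hcom i j).sublevel_subset_or (q i) (q j) |>.elim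
      (fun h => ⟨i, subset_rfl, h⟩) (fun h => ⟨j, h, subset_rfl⟩)
  obtain ⟨i₀, hi₀⟩ := hdir.finset_le Finset.univ
  have hsub : {ω | Xv i₀ ω ≤ q i₀} ⊆ {ω | ∑ i, Xv i ω ≤ ∑ i, q i} := fun ω hω =>
    Finset.sum_le_sum (f := fun i => Xv i ω) fun i hi => hi₀ i hi hω
  refine (quantR_le_iff (Finset.aemeasurable_fun_sum Finset.univ fun i _ => hX i) ht).2 ?_
  exact (le_cdfR_quantR (hX i₀) ht).trans (cdfR_le_cdfR_of_subset hsub)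

lemma sum_quantR_le (hcom : ∀ i j, ComonRV (Xv i) (Xv j)) (hX : ∀ i, AEMeasurable (Xv i) P)
    {t : ℝ} (ht : t ∈ Ioo 0 1) :
    ∑ i, quantR P (Xv i) t ≤ quantR P (fun ω => ∑ i, Xv i ω) t := by
  set q := fun i => quantR P (Xv i) t
  set qS := quantR P (fun ω => ∑ i, Xv i ω) t
  by_contra! hlt
  -- the thresholds `q i - δ` sum to `qS`, yet each of their sublevel sets has probability `< t`
  set δ := (∑ i, q i - qS) / Fintype.card ι
  have hδ : 0 < δ := div_pos (sub_pos.2 hlt) (Nat.cast_pos.2 Fintype.card_pos)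
  set b := fun i => q i - δ
  have hb : ∑ i, b i = qS := by
    simp only [b, δ, Finset.sum_sub_distrib, Finset.sum_const, Finset.card_univ, nsmul_eq_mul]
    field_simp
    ring
  have hdir : Directed (· ⊆ ·) fun i => {ω | Xv i ω ≤ b i} := fun i j =>
    (hcom i j).sublevel_subset_or (b i) (b j) |>.elim
      (fun h => ⟨j, h, subset_rfl⟩) (fun h => ⟨i, subset_rfl, h⟩)
  obtain ⟨i₀, hi₀⟩ := hdir.finset_le Finset.univ
  have hsub : {ω | ∑ i, Xv i ω ≤ qS} ⊆ {ω | Xv i₀ ω ≤ b i₀} := fun ω hω => by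
    by_contra hgt
    have hall : ∀ i, b i < Xv i ω := fun i =>
      not_le.1 fun h => hgt (hi₀ i (Finset.mem_univ i) h)
    exact (Finset.sum_lt_sum_of_nonempty Finset.univ_nonempty fun i _ => hall i).not_ge
      (hb ▸ hω)
  have hS := le_cdfR_quantR (Finset.aemeasurable_fun_sum Finset.univ fun i _ => hX i) ht
  exact ((hS.trans (cdfR_le_cdfR_of_subset hsub)).trans_lt
    (cdfR_lt_of_lt_quantR (hX i₀) ht (sub_lt_self _ hδ))).false

theorem quantR_sum_of_comonRV (hcom : ∀ i j, ComonRV (Xv i) (Xv j))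
    (hX : ∀ i, AEMeasurable (Xv i) P) {t : ℝ} (ht : t ∈ Ioo 0 1) :
    quantR P (fun ω => ∑ i, Xv i ω) t = ∑ i, quantR P (Xv i) t :=
  (quantR_sum_le hcom hX ht).antisymm (sum_quantR_le hcom hX ht)

end Comonotone

section QuantileTuple

variable {ι : Type*} [Fintype ι] {f : ι → ℝ → ℝ}

lemma abs_sub_le_abs_sum_sub_of_monotoneOn {s : Set ℝ} (hf : ∀ i, MonotoneOn (f i) s) {x y : ℝ}
    (hx : x ∈ s) (hy : y ∈ s) (i : ι) : |f i y - f i x| ≤ |∑ j, f j y - ∑ j, f j x| := by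
  wlog hxy : x ≤ y generalizing x y
  · rw [abs_sub_comm, abs_sub_comm (∑ j, f j y)]
    exact this hy hx (le_of_not_ge hxy)
  rw [abs_of_nonneg (sub_nonneg.2 (hf i hx hy hxy)), ← Finset.sum_sub_distrib]
  exact (Finset.single_le_sum (fun j _ => sub_nonneg.2 (hf j hx hy hxy))
    (Finset.mem_univ i)).trans (le_abs_self _)

lemma exists_bound_of_monotoneOn_of_sum {s : Set ℝ} (hs : s.Nonempty)
    (hf : ∀ i, MonotoneOn (f i) s) {C : ℝ} (hC : ∀ t ∈ s, |∑ j, f j t| ≤ C) (i : ι) :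
    ∃ K, ∀ t ∈ s, |f i t| ≤ K := by
  obtain ⟨a, ha⟩ := hs
  refine ⟨|f i a| + 2 * C, fun t ht => ?_⟩
  have h1 := abs_sub_le_abs_sum_sub_of_monotoneOn hf ha ht i
  have h2 := (abs_sub _ _).trans (add_le_add (hC t ht) (hC a ha))
  calc |f i t| = |f i a + (f i t - f i a)| := by rw [add_sub_cancel]
    _ ≤ |f i a| + 2 * C := (abs_add_le _ _).trans (by linarith)

lemma integrableOn_comp_of_monotoneOn {u : ℝ → ℝ} (hu : Continuous u) {g : ℝ → ℝ}
    (hg : MonotoneOn g (Ioo 0 1)) {K : ℝ} (hK : ∀ t ∈ Ioo (0:ℝ) 1, |g t| ≤ K) :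
    IntegrableOn (fun t => u (g t)) (Ioo 0 1) := by
  obtain ⟨M, hM⟩ :=
    (isCompact_Icc (a := -K) (b := K)).exists_bound_of_continuousOn hu.continuousOn
  have hgm := aemeasurable_restrict_of_monotoneOn (μ := volume) measurableSet_Ioo hg
  exact IntegrableOn.of_bound measure_Ioo_lt_top
    (hu.measurable.comp_aemeasurable hgm).aestronglyMeasurable M
    (ae_restrict_of_forall_mem measurableSet_Ioo fun t ht => hM _ (abs_le.1 (hK t ht)))

lemma setIntegral_sum_mul_comp {u : ι → ℝ → ℝ} (hu : ∀ i, Continuous (u i)) (lam : ι → ℝ)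
    (hf : ∀ i, MonotoneOn (f i) (Ioo 0 1)) (hb : ∀ i, ∃ K, ∀ t ∈ Ioo (0:ℝ) 1, |f i t| ≤ K) :
    ∫ t in Ioo 0 1, ∑ i, lam i * u i (f i t) = ∑ i, lam i * ∫ t in Ioo 0 1, u i (f i t) := by
  rw [integral_finsetSum]
  · simp only [integral_const_mul]
  · intro i _
    obtain ⟨K, hK⟩ := hb i
    exact (integrableOn_comp_of_monotoneOn (hu i) (hf i) hK).const_mul (lam i)

end QuantileTuple

lemma IsUtility.continuous {u : ℝ → ℝ} (hu : IsUtility u) : Continuous u :=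
  continuous_iff_continuousAt.2 fun x => (hu.1 x).continuousAt

section UniformRepresentation

variable {Ω : Type*} [MeasurableSpace Ω] {P : Measure Ω} [IsProbabilityMeasure P] {U : Ω → ℝ}

/-- `U` redefined as `1/2` on the null set where it leaves `(0,1)`: composing it with a function
that is only controlled on `(0,1)` gives a random variable that is bounded everywhere. -/
noncomputable def Uioo (U : Ω → ℝ) (ω : Ω) : ℝ := if U ω ∈ Ioo 0 1 then U ω else 1 / 2

omit [MeasurableSpace Ω] in
lemma Uioo_mem (U : Ω → ℝ) (ω : Ω) : Uioo U ω ∈ Ioo 0 1 := by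
  unfold Uioo
  split_ifs with h
  · exact h
  · norm_num

omit [MeasurableSpace Ω] in
lemma Uioo_of_mem {ω : Ω} (h : U ω ∈ Ioo 0 1) : Uioo U ω = U ω := if_pos h

omit [IsProbabilityMeasure P] in
lemma measurable_Uioo (hU : Measurable U) : Measurable (Uioo U) :=
  Measurable.ite (hU measurableSet_Ioo) hU measurable_const

omit [MeasurableSpace Ω] in
lemma ComonRV.comp_of_monotoneOn {s : Set ℝ} {f g : ℝ → ℝ} (hf : MonotoneOn f s)
    (hg : MonotoneOn g s) {V : Ω → ℝ} (hV : ∀ ω, V ω ∈ s) :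
    ComonRV (fun ω => f (V ω)) (fun ω => g (V ω)) := fun ω ω' => by
  rcases le_total (V ω) (V ω') with h | h
  · exact mul_nonneg_of_nonpos_of_nonpos (sub_nonpos.2 (hf (hV ω) (hV ω') h))
      (sub_nonpos.2 (hg (hV ω) (hV ω') h))
  · exact mul_nonneg (sub_nonneg.2 (hf (hV ω') (hV ω) h)) (sub_nonneg.2 (hg (hV ω') (hV ω) h))

omit [IsProbabilityMeasure P] in
lemma isBddRV_comp_Uioo (hU : Measurable U) {f : ℝ → ℝ} (hf : MonotoneOn f (Ioo 0 1)) {K : ℝ}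
    (hK : ∀ t ∈ Ioo (0:ℝ) 1, |f t| ≤ K) : IsBddRV (fun ω => f (Uioo U ω)) := by
  obtain ⟨g, hg, hfg⟩ := hf.exists_monotone_extension
    ⟨-K, forall_mem_image.2 fun t ht => neg_le_of_abs_le (hK t ht)⟩
    ⟨K, forall_mem_image.2 fun t ht => le_of_abs_le (hK t ht)⟩
  have : (fun ω => f (Uioo U ω)) = fun ω => g (Uioo U ω) := funext fun ω => hfg (Uioo_mem U ω)
  exact ⟨this ▸ hg.measurable.comp (measurable_Uioo hU), K, fun ω => hK _ (Uioo_mem U ω)⟩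

lemma EUf_comp_unifOn01 (hU : UnifOn01 P U) {u : ℝ → ℝ} (hu : Measurable u) {f : ℝ → ℝ}
    (hf : MonotoneOn f (Ioo 0 1)) : EUf P u (fun ω => f (U ω)) = ∫ t in Ioo 0 1, u (f t) :=
  integral_comp_unifOn01 hU (h := fun t => u (f t)) <| hu.comp_aemeasurable
    (aemeasurable_restrict_of_monotoneOn measurableSet_Ioo hf) |>.aestronglyMeasurable

lemma EUf_comp_Uioo (hU : UnifOn01 P U) {u : ℝ → ℝ} (hu : Measurable u) {f : ℝ → ℝ}
    (hf : MonotoneOn f (Ioo 0 1)) :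
    EUf P u (fun ω => f (Uioo U ω)) = ∫ t in Ioo 0 1, u (f t) := by
  rw [← EUf_comp_unifOn01 hU hu hf]
  exact integral_congr_ae <|
    (ae_mem_Ioo_of_unifOn01 hU).mono fun ω h => by simp only [Uioo_of_mem h]

end UniformRepresentation

theorem statement3_general
    {Ω : Type*} [MeasurableSpace Ω] (P : Measure Ω) [IsProbabilityMeasure P]
    (n : ℕ) (hn : 1 ≤ n)
    (u : Fin n → ℝ → ℝ) (hu : ∀ i, IsUtility (u i))
    (lam : Fin n → ℝ)
    (X : Ω → ℝ) (hX : IsBddRV X) (w : ℝ)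
    (U : Ω → ℝ) (hU : UnifOn01 P U)
    (hUX : ∀ᵐ ω ∂P, w - X ω = quantR P (fun ω' => w - X ω') (U ω))
    (fstar : Fin n → ℝ → ℝ) (hf : ∀ i, IsQuantFun (fstar i))
    (hfsum : ∀ t ∈ Ioo (0:ℝ) 1, (∑ i, fstar i t) = quantR P (fun ω => w - X ω) t) :
    (∀ f : Fin n → ℝ → ℝ, (∀ i, IsQuantFun (f i)) →
        (∀ t ∈ Ioo (0:ℝ) 1, (∑ i, f i t) = quantR P (fun ω => w - X ω) t) →
        (∫ t in Ioo (0:ℝ) 1, ∑ i, lam i * u i (f i t)) ≤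
          ∫ t in Ioo (0:ℝ) 1, ∑ i, lam i * u i (fstar i t))
    ↔
    (∀ Xv : Fin n → Ω → ℝ, (∀ i, IsBddRV (Xv i)) →
        (∀ i j : Fin n, ComonRV (Xv i) (Xv j)) →
        (∀ᵐ ω ∂P, (∑ i, Xv i ω) = w - X ω) →
        (∑ i, lam i * EUf P (u i) (Xv i)) ≤
          ∑ i, lam i * EUf P (u i) (fun ω => fstar i (U ω))) := by
  obtain ⟨hXmeas, CX, hCX⟩ := hX
  have : Nonempty (Fin n) := ⟨⟨0, hn⟩⟩
  have huc i : Continuous (u i) := (hu i).continuous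
  set q := quantR P (fun ω => w - X ω)
  have hq : ∀ t ∈ Ioo (0:ℝ) 1, |q t| ≤ |w| + CX := fun t ht =>
    abs_quantR_le (by fun_prop) (fun ω => (abs_sub _ _).trans (by linarith [hCX ω])) ht
  have hbdd : ∀ g : Fin n → ℝ → ℝ, (∀ i, MonotoneOn (g i) (Ioo 0 1)) →
      (∀ t ∈ Ioo (0:ℝ) 1, ∑ i, g i t = q t) → ∀ i, ∃ K, ∀ t ∈ Ioo (0:ℝ) 1, |g i t| ≤ K :=
    fun g hg hgsum => exists_bound_of_monotoneOn_of_sum (nonempty_Ioo.2 one_pos) hg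
      (fun t ht => hgsum t ht ▸ hq t ht)
  have hfm i := (hf i).1
  have hstar i : EUf P (u i) (fun ω => fstar i (U ω)) = ∫ t in Ioo 0 1, u i (fstar i t) :=
    EUf_comp_unifOn01 hU (huc i).measurable (hfm i)
  rw [setIntegral_sum_mul_comp huc lam hfm (hbdd _ hfm hfsum)]
  simp only [hstar]
  constructor
  · intro hmax Xv hXv hcom hsum
    have hXm i : AEMeasurable (Xv i) P := (hXv i).1.aemeasurable
    have hqsum : ∀ t ∈ Ioo (0:ℝ) 1, ∑ i, quantR P (Xv i) t = q t := fun t ht => by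
      rw [← quantR_sum_of_comonRV hcom hXm ht, quantR_congr hsum]
    have hqm i := monotoneOn_quantR (hXm i)
    have key := hmax _ (fun i => isQuantFun_quantR (hXm i)) hqsum
    rw [setIntegral_sum_mul_comp huc lam hqm (hbdd _ hqm hqsum)] at key
    simpa only [EUf, integral_comp_eq_setIntegral_quantR (hXm _) (huc _).measurable] using key
  · intro hmax g hg hgsum
    have hgm i := (hg i).1
    choose K hK using hbdd g hgm hgsum
    have hgU : ∀ᵐ ω ∂P, ∑ i, g i (Uioo U ω) = w - X ω := by
      filter_upwards [ae_mem_Ioo_of_unifOn01 hU, hUX] with ω hω hωX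
      rw [Uioo_of_mem hω, hgsum _ hω, hωX]
    have key := hmax (fun i ω => g i (Uioo U ω))
      (fun i => isBddRV_comp_Uioo hU.1 (hgm i) (hK i))
      (fun i j => ComonRV.comp_of_monotoneOn (hgm i) (hgm j) (Uioo_mem U)) hgU
    rw [setIntegral_sum_mul_comp huc lam hgm (hbdd _ hgm hgsum)]
    simpa only [EUf_comp_Uioo hU (huc _).measurable (hgm _)] using key

/-- A tuple `(f₂*,…,fₙ*)` of quantile functions summing to `F_{w−X}⁻¹`
maximizes `∫₀¹ Σ λ_i u_i(f_i(t)) dt` over such tuples iff `(f₂*(U),…,fₙ*(U))` maximizes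
`Σ λ_i E_P[u_i(X_i)]` over all comonotonic vectors of bounded random variables summing
a.s. to `w − X`, where `U ~ Uni(0,1)` satisfies `w − X = F_{w−X}⁻¹(U)` a.s. -/
theorem statement3
    {Ω : Type*} [MeasurableSpace Ω] (P : Measure Ω) [IsProbabilityMeasure P]
    (hP : NonatomicM P)
    (n : ℕ) (hn : 1 ≤ n)
    (u : Fin n → ℝ → ℝ) (hu : ∀ i, IsUtility (u i))
    (lam : Fin n → ℝ) (hlam : ∀ i, 0 < lam i)
    (X : Ω → ℝ) (hX : IsBddRV X) (w : ℝ)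
    (U : Ω → ℝ) (hU : UnifOn01 P U)
    (hUX : ∀ᵐ ω ∂P, w - X ω = quantR P (fun ω' => w - X ω') (U ω))
    (fstar : Fin n → ℝ → ℝ) (hf : ∀ i, IsQuantFun (fstar i))
    (hfsum : ∀ t ∈ Ioo (0:ℝ) 1, (∑ i, fstar i t) = quantR P (fun ω => w - X ω) t) :
    (∀ f : Fin n → ℝ → ℝ, (∀ i, IsQuantFun (f i)) →
        (∀ t ∈ Ioo (0:ℝ) 1, (∑ i, f i t) = quantR P (fun ω => w - X ω) t) →
        (∫ t in Ioo (0:ℝ) 1, ∑ i, lam i * u i (f i t)) ≤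
          ∫ t in Ioo (0:ℝ) 1, ∑ i, lam i * u i (fstar i t))
    ↔
    (∀ Xv : Fin n → Ω → ℝ, (∀ i, IsBddRV (Xv i)) →
        (∀ i j : Fin n, ComonRV (Xv i) (Xv j)) →
        (∀ᵐ ω ∂P, (∑ i, Xv i ω) = w - X ω) →
        (∑ i, lam i * EUf P (u i) (Xv i)) ≤
          ∑ i, lam i * EUf P (u i) (fun ω => fstar i (U ω))) :=
  statement3_general P n hn u hu lam X hX w U hU hUX fstar hf hfsum
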